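/- Let H be a finite simple graph, and suppose there exists a positive integer h0 such that for every integer h ≥ h0, s(H^(h); H) = sup_G s(H^(h); G), where the supremum is over all finite graphs G (each taken with the uniform measure). Then H is balanced. -/

import Mathlib

open Finset
open scoped Classical

def IsStrongHom {α β : Type} (H : SimpleGraph α) (G : SimpleGraph β) (φ : α → β) : Prop :=
  ∀ u v : α, H.Adj u v ↔ G.Adj (φ u) (φ v)

def SimpleGraph.blowup {α : Type} (H : SimpleGraph α) (k : α → ℕ) :
    SimpleGraph (Σ v : α, Fin (k v)) where
  Adj x y := H.Adj x.1 y.1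
  symm := ⟨fun _ _ h => H.adj_symm h⟩
  loopless := ⟨fun x h => H.irrefl h⟩

def IsWeight {β : Type} [Fintype β] (μ : β → ℝ) : Prop :=
  (∀ v, 0 < μ v) ∧ ∑ v, μ v = 1

noncomputable def sdensity {α β : Type} [Fintype α] [Fintype β]
    (H : SimpleGraph α) (G : SimpleGraph β) (μ : β → ℝ) : ℝ :=
  ∑ ψ : α → β, if IsStrongHom H G ψ then ∏ v : α, μ (ψ v) else 0

def IsTwinFree {α : Type} (G : SimpleGraph α) : Prop :=
  ∀ u v : α, (∀ w, G.Adj u w ↔ G.Adj v w) → u = v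

def WEquiv {α β : Type} [Fintype α] [Fintype β]
    (G1 : SimpleGraph α) (μ1 : α → ℝ) (G2 : SimpleGraph β) (μ2 : β → ℝ) : Prop :=
  ∃ (m : ℕ) (T : SimpleGraph (Fin m)) (π1 : α → Fin m) (π2 : β → Fin m),
    IsTwinFree T ∧ IsStrongHom G1 T π1 ∧ IsStrongHom G2 T π2 ∧
    Function.Surjective π1 ∧ Function.Surjective π2 ∧
    ∀ t : Fin m,
      (∑ u ∈ Finset.univ.filter (fun u => π1 u = t), μ1 u) =
        ∑ u ∈ Finset.univ.filter (fun u => π2 u = t), μ2 u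

noncomputable def d1dist {α β : Type} [Fintype α] [Fintype β]
    (G1 : SimpleGraph α) (μ1 : α → ℝ) (G2 : SimpleGraph β) (μ2 : β → ℝ) : ℝ :=
  sInf {x : ℝ | ∃ (m : ℕ) (F1 F2 : SimpleGraph (Fin m)) (μ : Fin m → ℝ),
    IsWeight μ ∧ WEquiv F1 μ G1 μ1 ∧ WEquiv F2 μ G2 μ2 ∧
    x = ∑ u : Fin m, ∑ v : Fin m, μ u * μ v *
      |(if F1.Adj u v then (1:ℝ) else 0) - (if F2.Adj u v then (1:ℝ) else 0)|}

noncomputable def sdensityP {α β : Type} [Fintype α] [Fintype β]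
    (H : SimpleGraph α) (u0 : α) (G : SimpleGraph β) (v0 : β) (μ : β → ℝ) : ℝ :=
  ∑ ψ : α → β, if ψ u0 = v0 ∧ IsStrongHom H G ψ
    then ∏ v ∈ Finset.univ.erase u0, μ (ψ v) else 0

def GraphBalanced {α : Type} [Fintype α] (H : SimpleGraph α) : Prop :=
  ∃ (m : ℕ) (Ht : SimpleGraph (Fin m)) (k : Fin m → ℕ),
    (∀ v, 0 < k v) ∧ IsTwinFree Ht ∧ Nonempty (H ≃g Ht.blowup k) ∧
    ∀ σ : Ht ≃g Ht, ∀ v, k (σ v) = k v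



/-!
Write `H = T^(k)` with `T` twin-free. For positive `a`, the strong homomorphisms
`T^(a) → T^(w)` are exactly the maps lying over automorphisms `τ` of `T`, so with uniform
weights `s(T^(a); T^(w)) = ∑_τ ∏_v (w (τ v) / |w|) ^ a v`. Take `a = h k` and move the
weights away from `k / |k|` along `k c (1 - t k c)` (normalised): at `t = 0` the logarithm of
the `τ`-term has derivative `h (∑ k v ^ 2 - ∑ k v k (τ v)) = h/2 ∑ (k v - k (τ v)) ^ 2 ≥ 0`,
positive when `k ∘ τ ≠ k`. Hence if `k` is not `Aut T`-invariant, for large `N` the integer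
weights `k c (N - k c)` (the point `t = 1/N`) give a graph `G` with
`s(H^(h₀); G) > s(H^(h₀); H)`.
-/

section StrongHom

variable {α β γ : Type}

lemma IsStrongHom.comp {H : SimpleGraph α} {G : SimpleGraph β} {K : SimpleGraph γ}
    {φ : α → β} {ψ : β → γ} (hψ : IsStrongHom G K ψ) (hφ : IsStrongHom H G φ) :
    IsStrongHom H K (ψ ∘ φ) :=
  fun u v => (hφ u v).trans (hψ (φ u) (φ v))

lemma SimpleGraph.Iso.isStrongHom {H : SimpleGraph α} {G : SimpleGraph β} (e : H ≃g G) :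
    IsStrongHom H G e :=
  fun _ _ => e.map_adj_iff.symm

lemma IsTwinFree.injective_of_isStrongHom {H : SimpleGraph α} {G : SimpleGraph β}
    (hH : IsTwinFree H) {φ : α → β} (hφ : IsStrongHom H G φ) : Function.Injective φ :=
  fun u v huv => hH u v fun w => by rw [hφ u w, hφ v w, huv]

lemma IsTwinFree.eq_of_isStrongHom {H : SimpleGraph α} {G : SimpleGraph β}
    (hG : IsTwinFree G) {φ : α → β} (hφ : IsStrongHom H G φ) (hsurj : Function.Surjective φ)
    {x y : α} (hxy : ∀ z, H.Adj x z ↔ H.Adj y z) : φ x = φ y := by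
  refine hG _ _ fun t => ?_
  obtain ⟨z, rfl⟩ := hsurj t
  rw [← hφ, ← hφ, hxy]

lemma IsTwinFree.of_iso {H : SimpleGraph α} {G : SimpleGraph β} (e : H ≃g G)
    (hH : IsTwinFree H) : IsTwinFree G := by
  refine fun u v huv => e.symm.injective (hH _ _ fun w => ?_)
  rw [← e.map_adj_iff, ← e.map_adj_iff, e.apply_symm_apply, e.apply_symm_apply]
  exact huv (e w)

end StrongHom

section Density

variable {α β α' β' : Type} [Fintype α] [Fintype β] [Fintype α'] [Fintype β']

lemma sdensity_const (H : SimpleGraph α) (G : SimpleGraph β) (c : ℝ) :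
    sdensity H G (fun _ => c) = #{ψ | IsStrongHom H G ψ} * c ^ Fintype.card α := by
  simp [sdensity, sum_ite, prod_const]

lemma sdensity_const_congr {H : SimpleGraph α} {H' : SimpleGraph α'} {G : SimpleGraph β}
    {G' : SimpleGraph β'} (eH : H ≃g H') (eG : G ≃g G') (c : ℝ) :
    sdensity H G (fun _ => c) = sdensity H' G' (fun _ => c) := by
  have hcard : #{ψ | IsStrongHom H G ψ} = #{ψ | IsStrongHom H' G' ψ} := by
    simp only [← Fintype.card_subtype]
    exact Fintype.card_congr
      { toFun := fun ψ => ⟨eG ∘ ψ.1 ∘ eH.symm,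
          eG.isStrongHom.comp (ψ.2.comp eH.symm.isStrongHom)⟩
        invFun := fun ψ => ⟨eG.symm ∘ ψ.1 ∘ eH,
          eG.symm.isStrongHom.comp (ψ.2.comp eH.isStrongHom)⟩
        left_inv := fun ψ => by ext; simp
        right_inv := fun ψ => by ext; simp }
  rw [sdensity_const, sdensity_const, hcard, Fintype.card_congr eH.toEquiv]

lemma sdensity_le_one (H : SimpleGraph α) (G : SimpleGraph β) {μ : β → ℝ}
    (hμ0 : ∀ b, 0 ≤ μ b) (hμ1 : ∑ b, μ b = 1) : sdensity H G μ ≤ 1 :=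
  calc sdensity H G μ ≤ ∑ ψ : α → β, ∏ v, μ (ψ v) :=
        sum_le_sum fun ψ _ => by
          split_ifs
          exacts [le_rfl, prod_nonneg fun v _ => hμ0 _]
    _ = 1 := by rw [← Fintype.prod_sum, hμ1, prod_const_one]

end Density

namespace SimpleGraph

variable {α β γ : Type}

def Iso.blowupCongr {G : SimpleGraph α} {G' : SimpleGraph β} (e : G ≃g G') {k : α → ℕ}
    {k' : β → ℕ} (hk : ∀ a, k a = k' (e a)) : G.blowup k ≃g G'.blowup k' where
  toFun x := ⟨e x.1, Fin.cast (hk x.1) x.2⟩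
  invFun y := ⟨e.symm y.1, Fin.cast (by rw [hk, e.apply_symm_apply]) y.2⟩
  left_inv x := Sigma.ext (by simp) ((Fin.heq_ext_iff (by simp)).mpr rfl)
  right_inv y := Sigma.ext (by simp) ((Fin.heq_ext_iff (by simp)).mpr rfl)
  map_rel_iff' := e.map_adj_iff

def blowupBlowupIso (K : SimpleGraph γ) (k : γ → ℕ) (h : ℕ) :
    (K.blowup k).blowup (fun _ => h) ≃g K.blowup (fun v => h * k v) where
  toFun x := ⟨x.1.1, finProdFinEquiv (x.2, x.1.2)⟩
  invFun y := ⟨⟨y.1, (finProdFinEquiv.symm y.2).2⟩, (finProdFinEquiv.symm y.2).1⟩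
  left_inv x := by simp
  right_inv y := by dsimp only; rw [Prod.mk.eta, Equiv.apply_symm_apply]
  map_rel_iff' := Iff.rfl

def twinSetoid (H : SimpleGraph α) : Setoid α where
  r u v := ∀ w, H.Adj u w ↔ H.Adj v w
  iseqv := ⟨fun _ _ => Iff.rfl, fun h w => (h w).symm, fun h h' w => (h w).trans (h' w)⟩

def twinQuotient (H : SimpleGraph α) : SimpleGraph (Quotient H.twinSetoid) where
  Adj := Quotient.lift₂ H.Adj fun _ _ _ _ hu hv =>
    propext ((hu _).trans ⟨fun h => ((hv _).mp h.symm).symm, fun h => ((hv _).mpr h.symm).symm⟩)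
  symm := ⟨fun x y => Quotient.inductionOn₂ x y fun _ _ h => H.adj_symm h⟩
  loopless := ⟨fun x => Quotient.inductionOn x fun _ => H.irrefl⟩

lemma isTwinFree_twinQuotient (H : SimpleGraph α) : IsTwinFree H.twinQuotient :=
  fun x y => Quotient.inductionOn₂ x y fun _ _ h =>
    Quotient.sound fun w => h (Quotient.mk _ w)

variable [Fintype α]

noncomputable def isoBlowupTwinQuotient (H : SimpleGraph α) :
    H ≃g H.twinQuotient.blowup fun q => Fintype.card {a // Quotient.mk H.twinSetoid a = q} where
  toEquiv := (Equiv.sigmaFiberEquiv (Quotient.mk H.twinSetoid)).symm.trans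
    (Equiv.sigmaCongrRight fun _ => Fintype.equivFin _)
  map_rel_iff' := Iff.rfl

end SimpleGraph

lemma exists_isTwinFree_iso_blowup {α : Type} [Fintype α] (H : SimpleGraph α) :
    ∃ (m : ℕ) (T : SimpleGraph (Fin m)) (k : Fin m → ℕ),
      (∀ v, 0 < k v) ∧ IsTwinFree T ∧ Nonempty (H ≃g T.blowup k) := by
  let e := H.twinQuotient.overFinIso rfl
  refine ⟨_, _, fun i => Fintype.card {a // Quotient.mk H.twinSetoid a = e.symm i}, fun i => ?_,
    H.isTwinFree_twinQuotient.of_iso e, ⟨H.isoBlowupTwinQuotient.trans (e.blowupCongr ?_)⟩⟩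
  · obtain ⟨a, ha⟩ := Quotient.exists_rep (e.symm i)
    exact Fintype.card_pos_iff.mpr ⟨⟨a, ha⟩⟩
  · simp

noncomputable def autSum {β : Type} [Fintype β] (A : Finset (Equiv.Perm β)) (a : β → ℕ)
    (μ : β → ℝ) : ℝ :=
  ∑ τ ∈ A, ∏ v, μ (τ v) ^ a v

section BlowupDensity

variable {β : Type} [Fintype β] {T : SimpleGraph β} {a w : β → ℕ}

lemma isStrongHom_blowup_iff (hT : IsTwinFree T) (ha : ∀ v, 0 < a v)
    (ψ : (Σ v, Fin (a v)) → Σ v, Fin (w v)) :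
    IsStrongHom (T.blowup a) (T.blowup w) ψ ↔
      ∃ τ : Equiv.Perm β, IsStrongHom T T τ ∧ ∀ x, (ψ x).1 = τ x.1 := by
  constructor
  · intro hψ
    let ι : β → Σ v, Fin (a v) := fun v => ⟨v, ⟨0, ha v⟩⟩
    have hφ : IsStrongHom (T.blowup a) T fun x => (ψ x).1 := hψ
    have hσ : IsStrongHom T T fun v => (ψ (ι v)).1 := fun u v => hφ (ι u) (ι v)
    have hbij := Finite.injective_iff_bijective.mp (hT.injective_of_isStrongHom hσ)
    refine ⟨Equiv.ofBijective _ hbij, hσ, fun x => hT.eq_of_isStrongHom hφ ?_ fun _ => Iff.rfl⟩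
    exact fun t => (hbij.2 t).elim fun v hv => ⟨ι v, hv⟩
  · rintro ⟨τ, hτ, hψ⟩ x y
    change T.Adj x.1 y.1 ↔ T.Adj (ψ x).1 (ψ y).1
    rw [hψ, hψ]
    exact hτ _ _

variable (a w) in
noncomputable def blowupLiftEquiv (τ : Equiv.Perm β) :
    {ψ : (Σ v, Fin (a v)) → Σ v, Fin (w v) // ∀ x, (ψ x).1 = τ x.1} ≃
      ((x : Σ v, Fin (a v)) → Fin (w (τ x.1))) where
  toFun ψ x := Fin.cast (congrArg w (ψ.2 x)) (ψ.1 x).2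
  invFun g := ⟨fun x => ⟨τ x.1, g x⟩, fun _ => rfl⟩
  left_inv ψ := Subtype.ext <| funext fun x =>
    Sigma.ext (ψ.2 x).symm ((Fin.heq_ext_iff (congrArg w (ψ.2 x).symm)).mpr rfl)
  right_inv _ := rfl

lemma card_isStrongHom_blowup (hT : IsTwinFree T) (ha : ∀ v, 0 < a v) :
    #{ψ | IsStrongHom (T.blowup a) (T.blowup w) ψ} =
      ∑ τ ∈ {τ : Equiv.Perm β | IsStrongHom T T τ}, ∏ v, w (τ v) ^ a v := by
  have hunion : ({ψ | IsStrongHom (T.blowup a) (T.blowup w) ψ} : Finset _) =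
      ({τ : Equiv.Perm β | IsStrongHom T T τ} : Finset _).biUnion
        fun τ => {ψ : (Σ v, Fin (a v)) → Σ v, Fin (w v) | ∀ x, (ψ x).1 = τ x.1} := by
    ext ψ
    simp [isStrongHom_blowup_iff hT ha]
  rw [hunion, card_biUnion]
  · refine sum_congr rfl fun τ _ => ?_
    rw [← Fintype.card_subtype, Fintype.card_congr (blowupLiftEquiv a w τ), Fintype.card_pi]
    simp [Fintype.prod_sigma]
  · intro τ _ τ' _ hne
    simp only [Function.onFun, disjoint_filter]
    exact fun ψ _ h h' => hne (Equiv.ext fun v => (h ⟨v, ⟨0, ha v⟩⟩).symm.trans (h' _))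

lemma sdensity_blowup_blowup (hT : IsTwinFree T) (ha : ∀ v, 0 < a v) :
    sdensity (T.blowup a) (T.blowup w) (fun _ => ((∑ v, w v : ℕ) : ℝ)⁻¹) =
      autSum {τ | IsStrongHom T T τ} a fun c => w c / ((∑ v, w v : ℕ) : ℝ) := by
  rw [sdensity_const, autSum]
  convert_to (((∑ τ ∈ {τ : Equiv.Perm β | IsStrongHom T T τ}, ∏ v, w (τ v) ^ a v : ℕ) : ℝ) *
    ((∑ v, w v : ℕ) : ℝ)⁻¹ ^ ∑ v, a v) = _
  · congr 1
    -- `sdensity` carries the classical `DecidableEq` on the sigma type, the count the derived one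
    · convert congrArg Nat.cast (card_isStrongHom_blowup (w := w) hT ha)
    · simp
  rw [Nat.cast_sum, sum_mul]
  refine sum_congr rfl fun τ _ => ?_
  simp [div_eq_mul_inv, mul_pow, prod_mul_distrib, prod_pow_eq_pow_sum]

section Tilt

open Real Filter

lemma sum_mul_sub_comp_perm {β : Type} [Fintype β] {f : β → ℝ} (hf : ∑ v, f v ≠ 0)
    (τ : Equiv.Perm β) :
    ∑ v, f v * ((∑ u, f u ^ 2) / (∑ u, f u) - f (τ v)) = (∑ v, (f v - f (τ v)) ^ 2) / 2 := by
  have hτ := Equiv.sum_comp τ fun v => f v ^ 2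
  simp only [mul_sub, sub_sq, sum_add_distrib, sum_sub_distrib, hτ, ← sum_mul, mul_assoc,
    ← mul_sum]
  field_simp
  ring

lemma autSum_eq_sum_exp_log {β : Type} [Fintype β] (A : Finset (Equiv.Perm β)) (a : β → ℕ)
    {μ : β → ℝ} (hμ : ∀ c, 0 < μ c) :
    autSum A a μ = ∑ τ ∈ A, exp (∑ v, a v * log (μ (τ v))) := by
  refine sum_congr rfl fun τ _ => ?_
  rw [exp_sum]
  exact prod_congr rfl fun v _ => by rw [exp_nat_mul, exp_log (hμ _)]

lemma HasDerivAt.eventually_lt_inv_natCast {f : ℝ → ℝ} {f' : ℝ} (hf : HasDerivAt f f' 0)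
    (hf' : 0 < f') : ∀ᶠ N : ℕ in atTop, f 0 < f (N : ℝ)⁻¹ := by
  have hslope := hf.tendsto_slope_zero_right.comp
    (tendsto_inv_atTop_nhdsGT_zero.comp tendsto_natCast_atTop_atTop)
  filter_upwards [hslope.eventually (lt_mem_nhds hf'), eventually_gt_atTop 0] with N hN hN0
  simp only [Function.comp_apply, inv_inv, zero_add, smul_eq_mul] at hN
  nlinarith [(Nat.cast_pos (α := ℝ)).mpr hN0]

variable {β : Type} [Fintype β] (k : β → ℕ)

noncomputable def tilt (t : ℝ) (c : β) : ℝ :=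
  (k c - t * k c ^ 2) / ∑ v, ((k v : ℝ) - t * k v ^ 2)

lemma tilt_zero : tilt k 0 = fun c => k c / ((∑ v, k v : ℕ) : ℝ) := by
  ext c
  simp [tilt]

lemma tilt_inv_natCast {N : ℕ} (hN : ∀ c, k c ≤ N) :
    tilt k (N : ℝ)⁻¹ = fun c => ((k c * (N - k c) : ℕ) : ℝ) / ((∑ v, k v * (N - k v) : ℕ) : ℝ) := by
  ext c
  rcases N.eq_zero_or_pos with rfl | hN0
  · simp [tilt, Nat.le_zero.mp (hN c)]
  have hN0' : (N : ℝ) ≠ 0 := by positivity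
  simp only [tilt, Nat.cast_sum, Nat.cast_mul, Nat.cast_sub (hN _)]
  rw [← mul_div_mul_left _ _ hN0', mul_sum]
  congr 1
  · field_simp
  · exact sum_congr rfl fun v _ => by field_simp

lemma hasDerivAt_log_tilt (hk : ∀ v, 0 < k v) (c : β) :
    HasDerivAt (fun t => log (tilt k t c))
      ((∑ v, (k v : ℝ) ^ 2) / (∑ v, (k v : ℝ)) - k c) 0 := by
  have hline (x : ℝ) : HasDerivAt (fun t => x - t * x ^ 2) (-x ^ 2) 0 := by
    simpa using ((hasDerivAt_id (0 : ℝ)).mul_const (x ^ 2)).const_sub x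
  have hkc : (0 : ℝ) < k c := by exact_mod_cast hk c
  have hn : (0 : ℝ) < ∑ v, (k v : ℝ) :=
    sum_pos' (fun v _ => by positivity) ⟨c, mem_univ c, hkc⟩
  have hden := HasDerivAt.fun_sum (u := univ) fun v _ => hline (k v)
  have hquot := ((hline (k c)).fun_div hden (by simpa using hn.ne')).log
    (by simpa using div_ne_zero hkc.ne' hn.ne')
  unfold tilt
  convert hquot using 1
  simp only [zero_mul, sub_zero, sum_neg_distrib]
  field_simp
  ring

lemma hasDerivAt_sum_exp_log_tilt (hk : ∀ v, 0 < k v) (A : Finset (Equiv.Perm β))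
    (a : β → ℕ) :
    HasDerivAt (fun t => ∑ τ ∈ A, exp (∑ v, a v * log (tilt k t (τ v))))
      (∑ τ ∈ A, exp (∑ v, a v * log (tilt k 0 (τ v))) *
        ∑ v, a v * ((∑ u, (k u : ℝ) ^ 2) / (∑ u, (k u : ℝ)) - k (τ v))) 0 :=
  HasDerivAt.fun_sum fun τ _ =>
    (HasDerivAt.fun_sum fun v _ => (hasDerivAt_log_tilt k hk (τ v)).const_mul _).exp

end Tilt

open Real Filter in
theorem exists_autSum_lt {β : Type} [Fintype β] (A : Finset (Equiv.Perm β)) {k : β → ℕ}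
    (hk : ∀ v, 0 < k v) {h : ℕ} (hh : 0 < h) {σ : Equiv.Perm β} (hσ : σ ∈ A) {v₀ : β}
    (hv₀ : k (σ v₀) ≠ k v₀) :
    ∃ w : β → ℕ, (∀ v, 0 < w v) ∧
      autSum A (fun v => h * k v) (fun c => k c / ((∑ v, k v : ℕ) : ℝ)) <
        autSum A (fun v => h * k v) (fun c => w c / ((∑ v, w v : ℕ) : ℝ)) := by
  have hn : ∑ v, (k v : ℝ) ≠ 0 :=
    (sum_pos' (fun v _ => by positivity) ⟨v₀, mem_univ _, by exact_mod_cast hk v₀⟩).ne'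
  have hrate (τ : Equiv.Perm β) :
      ∑ v, ((h * k v : ℕ) : ℝ) * ((∑ u, (k u : ℝ) ^ 2) / (∑ u, (k u : ℝ)) - k (τ v)) =
        h * ((∑ v, ((k v : ℝ) - k (τ v)) ^ 2) / 2) := by
    simp only [Nat.cast_mul, mul_assoc, ← mul_sum, sum_mul_sub_comp_perm hn]
  have hG := hasDerivAt_sum_exp_log_tilt k hk A fun v => h * k v
  simp only [hrate] at hG
  have hsq : 0 < ((k v₀ : ℝ) - k (σ v₀)) ^ 2 := by
    have : (k v₀ : ℝ) ≠ k (σ v₀) := by exact_mod_cast hv₀.symm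
    positivity
  have hsum : 0 < ∑ v, ((k v : ℝ) - k (σ v)) ^ 2 :=
    sum_pos' (fun v _ => sq_nonneg _) ⟨v₀, mem_univ _, hsq⟩
  obtain ⟨N, hGN, hN⟩ := ((hG.eventually_lt_inv_natCast
    (sum_pos' (fun τ _ => by positivity) ⟨σ, hσ, by positivity⟩)).and
      (eventually_gt_atTop (∑ v, k v))).exists
  have hkN (c : β) : k c < N :=
    (single_le_sum (fun v _ => Nat.zero_le (k v)) (mem_univ c)).trans_lt hN
  have hw (c : β) : 0 < k c * (N - k c) := Nat.mul_pos (hk c) (Nat.sub_pos_of_lt (hkN c))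
  refine ⟨fun c => k c * (N - k c), hw, ?_⟩
  have hpos {u : β → ℕ} (hu : ∀ c, 0 < u c) (c : β) : (0 : ℝ) < u c / ((∑ v, u v : ℕ) : ℝ) :=
    div_pos (by exact_mod_cast hu c) (by exact_mod_cast sum_pos (fun v _ => hu v) ⟨c, mem_univ c⟩)
  have htiltN := tilt_inv_natCast k fun c => (hkN c).le
  have hpos₀ : ∀ c, 0 < tilt k 0 c := by rw [tilt_zero]; exact hpos hk
  have hposN : ∀ c, 0 < tilt k (N : ℝ)⁻¹ c := by rw [htiltN]; exact hpos hw
  beta_reduce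
  rwa [← tilt_zero, ← htiltN, autSum_eq_sum_exp_log _ _ hpos₀, autSum_eq_sum_exp_log _ _ hposN]

lemma exists_sdensity_blowup_gt {β : Type} [Fintype β] {T : SimpleGraph β} (hT : IsTwinFree T)
    {k : β → ℕ} (hk : ∀ v, 0 < k v) {h : ℕ} (hh : 0 < h) (σ : T ≃g T) {v₀ : β}
    (hv₀ : k (σ v₀) ≠ k v₀) :
    ∃ n : ℕ, 0 < n ∧ ∃ G : SimpleGraph (Fin n),
      sdensity ((T.blowup k).blowup fun _ => h) (T.blowup k) (fun _ => ((∑ v, k v : ℕ) : ℝ)⁻¹) <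
        sdensity ((T.blowup k).blowup fun _ => h) G (fun _ => (n : ℝ)⁻¹) := by
  have ha (v : β) : 0 < h * k v := Nat.mul_pos hh (hk v)
  obtain ⟨w, hw, hlt⟩ := exists_autSum_lt {τ | IsStrongHom T T τ} hk hh (σ := σ.toEquiv)
    (by simpa using σ.isStrongHom) hv₀
  refine ⟨_, sum_pos (fun v _ => hw v) ⟨v₀, mem_univ _⟩, (T.blowup w).overFin (by simp), ?_⟩
  rwa [sdensity_const_congr (T.blowupBlowupIso k h) (SimpleGraph.Iso.refl),
    sdensity_const_congr (T.blowupBlowupIso k h) ((T.blowup w).overFinIso _).symm,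
    sdensity_blowup_blowup hT ha, sdensity_blowup_blowup hT ha]

theorem stmt2_general {α : Type} [Fintype α] (H : SimpleGraph α)
    (hsup : ∃ h0 : ℕ, 0 < h0 ∧ ∀ h : ℕ, h0 ≤ h →
      sdensity (H.blowup fun _ => h) H (fun _ => (Fintype.card α : ℝ)⁻¹) =
        sSup {x : ℝ | ∃ n : ℕ, 0 < n ∧ ∃ G : SimpleGraph (Fin n),
          x = sdensity (H.blowup fun _ => h) G (fun _ => (n : ℝ)⁻¹)}) :
    GraphBalanced H := by
  obtain ⟨h₀, hh₀, hsup⟩ := hsup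
  obtain ⟨m, T, k, hk, hT, ⟨e⟩⟩ := exists_isTwinFree_iso_blowup H
  refine ⟨m, T, k, hk, hT, ⟨e⟩, ?_⟩
  by_contra! ⟨σ, v₀, hv₀⟩
  obtain ⟨n, hn, G, hlt⟩ := exists_sdensity_blowup_gt hT hk hh₀ σ hv₀
  have hcard : Fintype.card α = ∑ v, k v := by simp [Fintype.card_congr e.toEquiv]
  have eh : H.blowup (fun _ => h₀) ≃g (T.blowup k).blowup fun _ => h₀ := e.blowupCongr fun _ => rfl
  rw [← sdensity_const_congr eh e, ← sdensity_const_congr eh SimpleGraph.Iso.refl, ← hcard,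
    hsup h₀ le_rfl] at hlt
  refine hlt.not_ge (le_csSup ⟨1, ?_⟩ ⟨n, hn, G, rfl⟩)
  rintro _ ⟨n, hn, G, rfl⟩
  exact sdensity_le_one _ _ (fun _ => by positivity) (by simp [hn.ne'])

theorem stmt2 {α : Type} [Fintype α] [Nonempty α] (H : SimpleGraph α)
    (hsup : ∃ h0 : ℕ, 0 < h0 ∧ ∀ h : ℕ, h0 ≤ h →
      sdensity (H.blowup fun _ => h) H (fun _ => (Fintype.card α : ℝ)⁻¹) =
        sSup {x : ℝ | ∃ n : ℕ, 0 < n ∧ ∃ G : SimpleGraph (Fin n),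
          x = sdensity (H.blowup fun _ => h) G (fun _ => (n : ℝ)⁻¹)}) :
    GraphBalanced H :=
  stmt2_general H hsup
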